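/- For every normalized line profile b, Σ_{i=−k}^{−1} (Σⱼ |b j − b i|) · (|b (i+k+1)| − |b (i+k)|) + (Σⱼ |b j|) · (1 − |b k| − |b (−k)|) + Σ_{i=1}^{k} (Σⱼ |b j − b i|) · (|b (i−k−1)| − |b (i−k)|) = Σ_{j=1}^{k} |b j|·(2k+1−2j)·(|b (j−k−1)| − |b (j−k)|) + Σⱼ |b j| + Σ_{j=−k}^{−1} |b j|·(2k+1+2j)·(|b (j+k+1)| − |b (j+k)|). (The left-hand side is the social cost after the cut of the outcome of the Proportional Circle Distance mechanism, whose lottery selects the report of agent i with probability equal to the length of the arc opposing agent i.) -/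

import Mathlib

open Finset

noncomputable section

/-- The cyclic distance on representatives in `[-1/2, 1/2]`. -/
def dc (x y : ℝ) : ℝ := min |x - y| (1 - |x - y|)

/-- `b : ℤ → ℝ` is a normalized line profile for `2k+1` agents indexed by `{-k, …, k}`:
nondecreasing on `{-k, …, k}`, with values in `[-1/2, 1/2]`, and `b 0 = 0`. -/
def IsNormalized (k : ℤ) (b : ℤ → ℝ) : Prop :=
  (∀ i j : ℤ, -k ≤ i → i ≤ j → j ≤ k → b i ≤ b j) ∧
  (∀ i : ℤ, -k ≤ i → i ≤ k → b i ∈ Set.Icc (-(1 / 2) : ℝ) (1 / 2)) ∧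
  b 0 = 0

/-- A normalized line profile is admissible if some agent's report is nonzero. -/
def IsAdmissible (k : ℤ) (b : ℤ → ℝ) : Prop :=
  IsNormalized k b ∧ ∃ i : ℤ, -k ≤ i ∧ i ≤ k ∧ b i ≠ 0

/-- The numerator `Φ(b)` of the bound `φ(b)` on the approximation ratio of `RD+PCD`. -/
def Phi (k : ℤ) (b : ℤ → ℝ) : ℝ :=
  (∑ i ∈ Finset.Icc (-k) k, (4 * |(i : ℝ)| / (2 * (k : ℝ) + 1)) * |b i|) +
  (∑ j ∈ Finset.Icc (-k) k, |b j|) +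
  (∑ j ∈ Finset.Icc 1 k,
    |b j| * (2 * (k : ℝ) + 1 - 2 * (j : ℝ)) * (|b (j - k - 1)| - |b (j - k)|)) +
  (∑ j ∈ Finset.Icc (-k) (-1),
    |b j| * (2 * (k : ℝ) + 1 + 2 * (j : ℝ)) * (|b (j + k + 1)| - |b (j + k)|))

/-- The denominator `D(b) = 2 Σᵢ |b i|`. -/
def Dd (k : ℤ) (b : ℤ → ℝ) : ℝ := 2 * ∑ i ∈ Finset.Icc (-k) k, |b i|

/-- The bound `φ(b) = Φ(b) / D(b)`. -/
def phi (k : ℤ) (b : ℤ → ℝ) : ℝ := Phi k b / Dd k b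

private lemma sum_split (f : ℤ → ℝ) {a m c : ℤ} (h1 : a ≤ m) (h2 : m ≤ c + 1) :
    ∑ j ∈ Icc a c, f j = (∑ j ∈ Icc a (m-1), f j) + ∑ j ∈ Icc m c, f j := by
  have hu : Icc a c = Icc a (m-1) ∪ Icc m c := by
    ext x; simp only [mem_Icc, mem_union]; omega
  rw [hu, sum_union]
  rw [disjoint_left]; intro x hx hx'
  simp only [mem_Icc] at hx hx'; omega

private lemma tele (g : ℤ → ℝ) (a : ℤ) : ∀ c : ℤ, a - 1 ≤ c →
    ∑ i ∈ Icc a c, (g (i+1) - g i) = g (c+1) - g a := by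
  refine Int.le_induction ?_ ?_
  · rw [Icc_eq_empty (by omega), sum_empty, show a - 1 + 1 = a from by ring, sub_self]
  · intro n hn ih
    rw [show Icc a (n+1) = insert (n+1) (Icc a n) from by
        ext x; simp only [mem_Icc, mem_insert]; omega,
      sum_insert (by simp only [mem_Icc]; omega), ih]
    ring

private lemma tri (a c : ℤ) (f : ℤ → ℤ → ℝ) :
    ∑ i ∈ Icc a c, ∑ j ∈ Icc i c, f i j = ∑ j ∈ Icc a c, ∑ i ∈ Icc a j, f i j := by
  have L : ∀ i ∈ Icc a c, ∑ j ∈ Icc i c, f i j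
      = ∑ j ∈ Icc a c, if i ≤ j then f i j else 0 := by
    intro i hi
    rw [← Finset.sum_filter]
    congr 1
    ext x; simp only [mem_Icc, mem_filter] at hi ⊢; omega
  rw [Finset.sum_congr rfl L, Finset.sum_comm]
  refine Finset.sum_congr rfl fun j hj => ?_
  rw [← Finset.sum_filter]
  congr 1
  ext x; simp only [mem_Icc, mem_filter] at hj ⊢; omega

private lemma tri' (a c : ℤ) (f : ℤ → ℤ → ℝ) :
    ∑ i ∈ Icc a c, ∑ j ∈ Icc a (i-1), f i j = ∑ j ∈ Icc a c, ∑ i ∈ Icc (j+1) c, f i j := by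
  have L : ∀ i ∈ Icc a c, ∑ j ∈ Icc a (i-1), f i j
      = ∑ j ∈ Icc a c, if j + 1 ≤ i then f i j else 0 := by
    intro i hi
    rw [← Finset.sum_filter]
    congr 1
    ext x; simp only [mem_Icc, mem_filter] at hi ⊢; omega
  rw [Finset.sum_congr rfl L, Finset.sum_comm]
  refine Finset.sum_congr rfl fun j hj => ?_
  rw [← Finset.sum_filter]
  congr 1
  ext x; simp only [mem_Icc, mem_filter] at hj ⊢; omega

private lemma shift (f : ℤ → ℝ) (a b c : ℤ) :
    ∑ i ∈ Icc a b, f i = ∑ i ∈ Icc (a - c) (b - c), f (i + c) := by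
  rw [show Icc a b = Icc ((a-c)+c) ((b-c)+c) from by congr 1 <;> ring,
    ← Finset.map_add_right_Icc, Finset.sum_map]
  rfl

private lemma castNat (n : ℤ) (h : 0 ≤ n) : ((n.toNat : ℕ) : ℝ) = (n : ℝ) := by
  have h2 := Int.toNat_of_nonneg h
  exact_mod_cast congrArg (fun z : ℤ => (z : ℝ)) h2

/-- Social cost after the cut of the Proportional Circle Distance outcome. -/
theorem pcd_cost_after_cut (k : ℤ) (hk : 1 ≤ k) (b : ℤ → ℝ) (hb : IsNormalized k b) :
    (∑ i ∈ Finset.Icc (-k) (-1),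
        (∑ j ∈ Finset.Icc (-k) k, |b j - b i|) * (|b (i + k + 1)| - |b (i + k)|)) +
      (∑ j ∈ Finset.Icc (-k) k, |b j|) * (1 - |b k| - |b (-k)|) +
      (∑ i ∈ Finset.Icc 1 k,
        (∑ j ∈ Finset.Icc (-k) k, |b j - b i|) * (|b (i - k - 1)| - |b (i - k)|)) =
    (∑ j ∈ Finset.Icc 1 k,
        |b j| * (2 * (k : ℝ) + 1 - 2 * (j : ℝ)) * (|b (j - k - 1)| - |b (j - k)|)) +
      (∑ j ∈ Finset.Icc (-k) k, |b j|) +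
      ∑ j ∈ Finset.Icc (-k) (-1),
        |b j| * (2 * (k : ℝ) + 1 + 2 * (j : ℝ)) * (|b (j + k + 1)| - |b (j + k)|) := by
  obtain ⟨hmono, -, hb0⟩ := hb
  have hpos : ∀ j : ℤ, 0 ≤ j → j ≤ k → |b j| = b j := fun j h1 h2 =>
    abs_of_nonneg (hb0 ▸ hmono 0 j (by omega) h1 h2)
  have hneg : ∀ j : ℤ, -k ≤ j → j ≤ 0 → |b j| = -b j := fun j h1 h2 =>
    abs_of_nonpos (hb0 ▸ hmono j 0 h1 h2 (by omega))
  have hTsplit : ∑ j ∈ Icc (-k) k, |b j|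
      = -(∑ j ∈ Icc (-k) (-1), b j) + ∑ j ∈ Icc 0 k, b j := by
    rw [sum_split (fun j => |b j|) (show -k ≤ 0 by omega) (by omega), show (0:ℤ)-1 = -1 from rfl,
      ← sum_neg_distrib]
    congr 1
    · exact sum_congr rfl fun j hj => by rw [mem_Icc] at hj; exact hneg j hj.1 (by omega)
    · exact sum_congr rfl fun j hj => by rw [mem_Icc] at hj; exact hpos j hj.1 hj.2
  have hS_neg : ∀ i : ℤ, -k ≤ i → i ≤ -1 →
      ∑ j ∈ Icc (-k) k, |b j - b i|
        = (∑ j ∈ Icc (-k) k, |b j|) + (2*(i:ℝ)-1) * b i + 2 * ∑ j ∈ Icc i (-1), b j := by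
    intro i h1 h2
    have e1 : ∑ j ∈ Icc (-k) k, |b j - b i|
        = (∑ j ∈ Icc (-k) (i-1), (b i - b j)) + ∑ j ∈ Icc i k, (b j - b i) := by
      rw [sum_split (fun j => |b j - b i|) h1 (by omega)]
      congr 1
      · exact sum_congr rfl fun j hj => by
          rw [mem_Icc] at hj
          rw [abs_of_nonpos (sub_nonpos.2 (hmono j i hj.1 (by omega) (by omega))), neg_sub]
      · exact sum_congr rfl fun j hj => by
          rw [mem_Icc] at hj
          exact abs_of_nonneg (sub_nonneg.2 (hmono i j h1 hj.1 hj.2))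
    have s1 : ∑ j ∈ Icc (-k) (i-1), b j
        = (∑ j ∈ Icc (-k) (-1), b j) - ∑ j ∈ Icc i (-1), b j := by
      have := sum_split b (a := -k) (m := i) (c := -1) h1 (by omega); linarith
    have s2 : ∑ j ∈ Icc i k, b j = (∑ j ∈ Icc i (-1), b j) + ∑ j ∈ Icc 0 k, b j := by
      have := sum_split b (a := i) (m := 0) (c := k) (by omega) (by omega)
      rw [this]; norm_num
    rw [e1, sum_sub_distrib, sum_sub_distrib, sum_const, sum_const, Int.card_Icc, Int.card_Icc,
      nsmul_eq_mul, nsmul_eq_mul, castNat _ (by omega), castNat _ (by omega), s1, s2, hTsplit]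
    push_cast
    ring
  have hS_pos : ∀ i : ℤ, 1 ≤ i → i ≤ k →
      ∑ j ∈ Icc (-k) k, |b j - b i|
        = (∑ j ∈ Icc (-k) k, |b j|) + (2*(i:ℝ)-1) * b i - 2 * ∑ j ∈ Icc 1 (i-1), b j := by
    intro i h1 h2
    have e1 : ∑ j ∈ Icc (-k) k, |b j - b i|
        = (∑ j ∈ Icc (-k) (i-1), (b i - b j)) + ∑ j ∈ Icc i k, (b j - b i) := by
      rw [sum_split (fun j => |b j - b i|) (show -k ≤ i by omega) (by omega)]
      congr 1
      · exact sum_congr rfl fun j hj => by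
          rw [mem_Icc] at hj
          rw [abs_of_nonpos (sub_nonpos.2 (hmono j i hj.1 (by omega) (by omega))), neg_sub]
      · exact sum_congr rfl fun j hj => by
          rw [mem_Icc] at hj
          exact abs_of_nonneg (sub_nonneg.2 (hmono i j (by omega) hj.1 hj.2))
    have s0 : ∑ j ∈ Icc 0 (i-1), b j = ∑ j ∈ Icc 1 (i-1), b j := by
      have := sum_split b (a := 0) (m := 1) (c := i-1) (by omega) (by omega)
      simpa [hb0] using this
    have s1 : ∑ j ∈ Icc (-k) (i-1), b j
        = (∑ j ∈ Icc (-k) (-1), b j) + ∑ j ∈ Icc 1 (i-1), b j := by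
      have := sum_split b (a := -k) (m := 0) (c := i-1) (by omega) (by omega)
      rw [this, s0]; norm_num
    have s2 : ∑ j ∈ Icc i k, b j
        = (∑ j ∈ Icc 0 k, b j) - ∑ j ∈ Icc 1 (i-1), b j := by
      have := sum_split b (a := 0) (m := i) (c := k) (by omega) (by omega)
      rw [this, s0]; ring
    rw [e1, sum_sub_distrib, sum_sub_distrib, sum_const, sum_const, Int.card_Icc, Int.card_Icc,
      nsmul_eq_mul, nsmul_eq_mul, castNat _ (by omega), castNat _ (by omega), s1, s2, hTsplit]
    push_cast
    ring
  -- telescoping sums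
  have hw : ∑ i ∈ Icc (-k) (-1), (b (i+k+1) - b (i+k)) = b k := by
    have e : ∀ i ∈ Icc (-k) (-1), b (i+k+1) - b (i+k)
        = (fun t : ℤ => b (t+k)) (i+1) - (fun t : ℤ => b (t+k)) i := fun i _ => by
      show b (i+k+1) - b (i+k) = b (i+1+k) - b (i+k)
      rw [show i+1+k = i+k+1 from by ring]
    rw [sum_congr rfl e, tele (fun t : ℤ => b (t+k)) (-k) (-1) (by omega)]
    show b (-1+1+k) - b (-k+k) = b k
    rw [show (-1:ℤ)+1+k = k from by ring, show -k+k = 0 from by ring, hb0, sub_zero]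
  have hv : ∑ i ∈ Icc 1 k, (b (i-k) - b (i-k-1)) = -b (-k) := by
    have e : ∀ i ∈ Icc 1 k, b (i-k) - b (i-k-1)
        = (fun t : ℤ => b (t-k-1)) (i+1) - (fun t : ℤ => b (t-k-1)) i := fun i _ => by
      show b (i-k) - b (i-k-1) = b (i+1-k-1) - b (i-k-1)
      rw [show i+1-k-1 = i-k from by ring]
    rw [sum_congr rfl e, tele (fun t : ℤ => b (t-k-1)) 1 k (by omega)]
    show b (k+1-k-1) - b (1-k-1) = -b (-k)
    rw [show k+1-k-1 = 0 from by ring, show 1-k-1 = -k from by ring, hb0, zero_sub]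
  -- Abel cross sums
  have hcr : ∑ i ∈ Icc (-k) (-1), (∑ j ∈ Icc i (-1), b j) * (b (i+k+1) - b (i+k))
      = ∑ j ∈ Icc (-k) (-1), b j * b (j+k+1) := by
    have e1 : ∀ i ∈ Icc (-k) (-1), (∑ j ∈ Icc i (-1), b j) * (b (i+k+1) - b (i+k))
        = ∑ j ∈ Icc i (-1), b j * (b (i+k+1) - b (i+k)) := fun i _ => sum_mul _ _ _
    rw [sum_congr rfl e1, tri (-k) (-1) (fun i j => b j * (b (i+k+1) - b (i+k)))]
    refine sum_congr rfl fun j hj => ?_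
    rw [mem_Icc] at hj
    rw [← mul_sum]
    congr 1
    have e : ∀ i ∈ Icc (-k) j, b (i+k+1) - b (i+k)
        = (fun t : ℤ => b (t+k)) (i+1) - (fun t : ℤ => b (t+k)) i := fun i _ => by
      show b (i+k+1) - b (i+k) = b (i+1+k) - b (i+k)
      rw [show i+1+k = i+k+1 from by ring]
    rw [sum_congr rfl e, tele (fun t : ℤ => b (t+k)) (-k) j (by omega)]
    show b (j+1+k) - b (-k+k) = b (j+k+1)
    rw [show j+1+k = j+k+1 from by ring, show -k+k = 0 from by ring, hb0, sub_zero]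
  have hcr2 : ∑ i ∈ Icc 1 k, (∑ j ∈ Icc 1 (i-1), b j) * (b (i-k) - b (i-k-1))
      = -∑ j ∈ Icc 1 k, b j * b (j-k) := by
    have e1 : ∀ i ∈ Icc 1 k, (∑ j ∈ Icc 1 (i-1), b j) * (b (i-k) - b (i-k-1))
        = ∑ j ∈ Icc 1 (i-1), b j * (b (i-k) - b (i-k-1)) := fun i _ => sum_mul _ _ _
    rw [sum_congr rfl e1, tri' 1 k (fun i j => b j * (b (i-k) - b (i-k-1))), ← sum_neg_distrib]
    refine sum_congr rfl fun j hj => ?_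
    rw [mem_Icc] at hj
    rw [← mul_sum]
    have e : ∀ i ∈ Icc (j+1) k, b (i-k) - b (i-k-1)
        = (fun t : ℤ => b (t-k-1)) (i+1) - (fun t : ℤ => b (t-k-1)) i := fun i _ => by
      show b (i-k) - b (i-k-1) = b (i+1-k-1) - b (i-k-1)
      rw [show i+1-k-1 = i-k from by ring]
    rw [sum_congr rfl e, tele (fun t : ℤ => b (t-k-1)) (j+1) k (by omega)]
    show b j * (b (k+1-k-1) - b (j+1-k-1)) = -(b j * b (j-k))
    rw [show k+1-k-1 = 0 from by ring, show j+1-k-1 = j-k from by ring, hb0, zero_sub]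
    ring
  -- the three pieces of the left-hand side
  have eA : ∑ i ∈ Icc (-k) (-1),
        (∑ j ∈ Icc (-k) k, |b j - b i|) * (|b (i + k + 1)| - |b (i + k)|)
      = (∑ j ∈ Icc (-k) k, |b j|) * b k
        + (∑ i ∈ Icc (-k) (-1), (2*(i:ℝ)-1) * b i * (b (i+k+1) - b (i+k)))
        + 2 * ∑ j ∈ Icc (-k) (-1), b j * b (j+k+1) := by
    have step1 : ∀ i ∈ Icc (-k) (-1),
        (∑ j ∈ Icc (-k) k, |b j - b i|) * (|b (i + k + 1)| - |b (i + k)|)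
        = (∑ j ∈ Icc (-k) k, |b j|) * (b (i+k+1) - b (i+k))
          + (2*(i:ℝ)-1) * b i * (b (i+k+1) - b (i+k))
          + 2 * ((∑ j ∈ Icc i (-1), b j) * (b (i+k+1) - b (i+k))) := by
      intro i hi; rw [mem_Icc] at hi
      rw [hS_neg i hi.1 hi.2, hpos (i+k+1) (by omega) (by omega), hpos (i+k) (by omega) (by omega)]
      ring
    rw [sum_congr rfl step1, sum_add_distrib, sum_add_distrib, ← mul_sum, ← mul_sum, hw, hcr]
  have eC : ∑ i ∈ Icc 1 k,
        (∑ j ∈ Icc (-k) k, |b j - b i|) * (|b (i - k - 1)| - |b (i - k)|)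
      = (∑ j ∈ Icc (-k) k, |b j|) * (-b (-k))
        + (∑ i ∈ Icc 1 k, (2*(i:ℝ)-1) * b i * (b (i-k) - b (i-k-1)))
        + 2 * ∑ j ∈ Icc 1 k, b j * b (j-k) := by
    have step1 : ∀ i ∈ Icc 1 k,
        (∑ j ∈ Icc (-k) k, |b j - b i|) * (|b (i - k - 1)| - |b (i - k)|)
        = (∑ j ∈ Icc (-k) k, |b j|) * (b (i-k) - b (i-k-1))
          + (2*(i:ℝ)-1) * b i * (b (i-k) - b (i-k-1))
          - 2 * ((∑ j ∈ Icc 1 (i-1), b j) * (b (i-k) - b (i-k-1))) := by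
      intro i hi; rw [mem_Icc] at hi
      rw [hS_pos i hi.1 hi.2, hneg (i-k-1) (by omega) (by omega), hneg (i-k) (by omega) (by omega)]
      ring
    rw [sum_congr rfl step1, sum_sub_distrib, sum_add_distrib, ← mul_sum, ← mul_sum, hv, hcr2]
    ring
  -- rewriting the right-hand side sums
  have eR1 : ∑ j ∈ Icc 1 k, |b j| * (2 * (k : ℝ) + 1 - 2 * (j : ℝ)) * (|b (j - k - 1)| - |b (j - k)|)
      = ∑ j ∈ Icc 1 k, b j * (2 * (k : ℝ) + 1 - 2 * (j : ℝ)) * (b (j-k) - b (j-k-1)) := by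
    refine sum_congr rfl fun j hj => ?_
    rw [mem_Icc] at hj
    rw [hpos j (by omega) hj.2, hneg (j-k-1) (by omega) (by omega), hneg (j-k) (by omega) (by omega)]
    ring
  have eR2 : ∑ j ∈ Icc (-k) (-1), |b j| * (2 * (k : ℝ) + 1 + 2 * (j : ℝ)) * (|b (j + k + 1)| - |b (j + k)|)
      = ∑ j ∈ Icc (-k) (-1), (-b j) * (2 * (k : ℝ) + 1 + 2 * (j : ℝ)) * (b (j+k+1) - b (j+k)) := by
    refine sum_congr rfl fun j hj => ?_
    rw [mem_Icc] at hj
    rw [hneg j hj.1 (by omega), hpos (j+k+1) (by omega) (by omega), hpos (j+k) (by omega) (by omega)]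
  -- the key combination identities
  have keyneg : (∑ i ∈ Icc (-k) (-1), (2*(i:ℝ)-1) * b i * (b (i+k+1) - b (i+k)))
        + 2 * (∑ j ∈ Icc (-k) (-1), b j * b (j+k+1))
        - ∑ j ∈ Icc (-k) (-1), (-b j) * (2 * (k : ℝ) + 1 + 2 * (j : ℝ)) * (b (j+k+1) - b (j+k))
      = ∑ j ∈ Icc (-k) (-1),
          ((2*(k:ℝ)+4*(j:ℝ)+2) * (b j * b (j+k+1)) - (2*(k:ℝ)+4*(j:ℝ)) * (b j * b (j+k))) := by
    rw [mul_sum, ← sum_add_distrib, ← sum_sub_distrib]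
    exact sum_congr rfl fun j _ => by ring
  have keypos : (∑ i ∈ Icc 1 k, (2*(i:ℝ)-1) * b i * (b (i-k) - b (i-k-1)))
        + 2 * (∑ j ∈ Icc 1 k, b j * b (j-k))
        - ∑ j ∈ Icc 1 k, b j * (2 * (k : ℝ) + 1 - 2 * (j : ℝ)) * (b (j-k) - b (j-k-1))
      = ∑ j ∈ Icc 1 k,
          ((4*(j:ℝ)-2*(k:ℝ)) * (b j * b (j-k)) - (4*(j:ℝ)-2*(k:ℝ)-2) * (b j * b (j-k-1))) := by
    rw [mul_sum, ← sum_add_distrib, ← sum_sub_distrib]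
    exact sum_congr rfl fun j _ => by ring
  have hEneg : ∑ j ∈ Icc (-k) (-1),
          ((2*(k:ℝ)+4*(j:ℝ)+2) * (b j * b (j+k+1)) - (2*(k:ℝ)+4*(j:ℝ)) * (b j * b (j+k)))
      = (∑ j ∈ Icc (-k) (-1), (2*(k:ℝ)+4*(j:ℝ)+2) * (b j * b (j+k+1)))
        - ∑ j ∈ Icc (-k) (-1), (2*(k:ℝ)+4*(j:ℝ)) * (b j * b (j+k)) := sum_sub_distrib _ _
  have hEpos : ∑ j ∈ Icc 1 k,
          ((4*(j:ℝ)-2*(k:ℝ)) * (b j * b (j-k)) - (4*(j:ℝ)-2*(k:ℝ)-2) * (b j * b (j-k-1)))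
      = (∑ j ∈ Icc 1 k, (4*(j:ℝ)-2*(k:ℝ)) * (b j * b (j-k)))
        - ∑ j ∈ Icc 1 k, (4*(j:ℝ)-2*(k:ℝ)-2) * (b j * b (j-k-1)) := sum_sub_distrib _ _
  -- reindexing identities
  have hN1 : ∑ j ∈ Icc (-k) (-1), (2*(k:ℝ)+4*(j:ℝ)+2) * (b j * b (j+k+1))
      = ∑ j ∈ Icc 1 k, (4*(j:ℝ)-2*(k:ℝ)-2) * (b j * b (j-k-1)) := by
    rw [shift (fun j => (2*(k:ℝ)+4*(j:ℝ)+2) * (b j * b (j+k+1))) (-k) (-1) (-(k+1))]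
    refine sum_congr (by congr 1 <;> ring) fun j hj => ?_
    show (2*(k:ℝ)+4*((j + -(k+1) : ℤ):ℝ)+2) * (b (j + -(k+1)) * b (j + -(k+1) + k + 1))
        = (4*(j:ℝ)-2*(k:ℝ)-2) * (b j * b (j-k-1))
    rw [show j + -(k+1) + k + 1 = j from by ring, show j + -(k+1) = j-k-1 from by ring]
    push_cast
    ring
  have hN2 : ∑ j ∈ Icc (-k) (-1), (2*(k:ℝ)+4*(j:ℝ)) * (b j * b (j+k))
      = ∑ j ∈ Icc 1 k, (4*(j:ℝ)-2*(k:ℝ)) * (b j * b (j-k)) := by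
    rw [shift (fun j => (2*(k:ℝ)+4*(j:ℝ)) * (b j * b (j+k))) (-k) (-1) (-k)]
    have hset : Icc (-k - -k) (-1 - -k) = Icc 0 (k-1) := by
      congr 1 <;> ring
    rw [hset]
    have e : ∀ j ∈ Icc 0 (k-1), (2*(k:ℝ)+4*((j + -k : ℤ):ℝ)) * (b (j + -k) * b (j + -k + k))
        = (4*(j:ℝ)-2*(k:ℝ)) * (b j * b (j-k)) := by
      intro j _
      rw [show j + -k + k = j from by ring, show j + -k = j-k from by ring]
      push_cast
      ring
    rw [sum_congr rfl e]
    have h1 : ∑ j ∈ Icc 0 k, (4*(j:ℝ)-2*(k:ℝ)) * (b j * b (j-k))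
        = (∑ j ∈ Icc 0 (k-1), (4*(j:ℝ)-2*(k:ℝ)) * (b j * b (j-k)))
          + (4*(k:ℝ)-2*(k:ℝ)) * (b k * b (k-k)) := by
      rw [sum_split (fun j => (4*(j:ℝ)-2*(k:ℝ)) * (b j * b (j-k))) (a := 0) (m := k)
        (by omega) (by omega), Icc_self, sum_singleton]
    have h2 : ∑ j ∈ Icc 0 k, (4*(j:ℝ)-2*(k:ℝ)) * (b j * b (j-k))
        = (4*(0:ℝ)-2*(k:ℝ)) * (b 0 * b (0-k))
          + ∑ j ∈ Icc 1 k, (4*(j:ℝ)-2*(k:ℝ)) * (b j * b (j-k)) := by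
      rw [sum_split (fun j => (4*(j:ℝ)-2*(k:ℝ)) * (b j * b (j-k))) (a := 0) (m := 1)
        (by omega) (by omega), show (1:ℤ)-1 = 0 from rfl, Icc_self, sum_singleton]
      norm_num
    rw [show k - k = 0 from by ring, hb0] at h1
    rw [hb0] at h2
    have hz1 : (4*(k:ℝ)-2*(k:ℝ)) * (b k * 0) = 0 := by ring
    have hz2 : (4*(0:ℝ)-2*(k:ℝ)) * ((0:ℝ) * b (0-k)) = 0 := by ring
    rw [hz1, add_zero] at h1
    rw [hz2, zero_add] at h2
    rw [← h1, h2]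
  -- putting everything together
  rw [hpos k (by omega) le_rfl, hneg (-k) le_rfl (by omega), eA, eC, eR1, eR2]
  linear_combination keyneg + keypos + hEneg + hEpos + hN1 - hN2
end
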